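/- Let Σ and Ψ be n×n positive semidefinite matrices with Σ ⪰ Ψ and Ψ⁺ ⪰ Σ⁺, and let Φ := (Σ^{1/2})ᵀ Ψ⁺ Σ^{1/2}. Then rank(Φ) = rank(Σ). -/

import Mathlib

/-! Write `S = Σ^{1/2}`, so that `S` is symmetric and `S S = Σ`. Then `Φ = S Ψ⁺ S` has rank at most
`rank S = rank Σ`. Conversely, `Ψ⁺ ⪰ Σ⁺` gives `Φ ⪰ S Σ⁺ S ⪰ 0`, and in the Loewner order a larger
positive semidefinite matrix has the smaller kernel, hence the larger rank; finally
`S (S Σ⁺ S) S = Σ Σ⁺ Σ = Σ` shows `rank (S Σ⁺ S) ≥ rank Σ`. -/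

open Matrix

/-- `B` is the Moore–Penrose pseudoinverse of `A`. -/
def IsMoorePenroseInv {n : ℕ} (A B : Matrix (Fin n) (Fin n) ℝ) : Prop :=
  A * B * A = A ∧ B * A * B = B ∧ (A * B)ᵀ = A * B ∧ (B * A)ᵀ = B * A

/-- The square root of a positive semidefinite matrix (removed from Mathlib; old definition). -/
noncomputable def Matrix.PosSemidef.sqrt {n : Type*} [Fintype n] [DecidableEq n] {A : Matrix n n ℝ}
    (hA : A.PosSemidef) : Matrix n n ℝ :=
  (hA.1.eigenvectorUnitary : Matrix n n ℝ) * diagonal ((↑) ∘ (hA.1.eigenvalues · |>.sqrt)) *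
    (star hA.1.eigenvectorUnitary : Matrix n n ℝ)

open scoped ComplexOrder

namespace Matrix

variable {m n : Type*} [Fintype n]

theorem rank_le_rank_of_ker_le {K : Type*} [Field K] {A B : Matrix m n K}
    (h : LinearMap.ker A.mulVecLin ≤ LinearMap.ker B.mulVecLin) : B.rank ≤ A.rank := by
  have hA := LinearMap.finrank_range_add_finrank_ker A.mulVecLin
  have hB := LinearMap.finrank_range_add_finrank_ker B.mulVecLin
  have hker := Submodule.finrank_mono h
  unfold rank
  omega

variable {𝕜 : Type*} [RCLike 𝕜]

theorem ker_mulVecLin_le_of_posSemidef_sub {A B : Matrix n n 𝕜} (hB : B.PosSemidef)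
    (hAB : (A - B).PosSemidef) : LinearMap.ker A.mulVecLin ≤ LinearMap.ker B.mulVecLin := by
  intro x hx
  rw [LinearMap.mem_ker, mulVecLin_apply] at hx ⊢
  have hAB_x := hAB.dotProduct_mulVec_nonneg x
  rw [sub_mulVec, dotProduct_sub, hx, dotProduct_zero, zero_sub, neg_nonneg] at hAB_x
  exact (hB.dotProduct_mulVec_zero_iff x).mp (le_antisymm hAB_x (hB.dotProduct_mulVec_nonneg x))

theorem rank_le_rank_of_posSemidef_sub {A B : Matrix n n 𝕜} (hB : B.PosSemidef)
    (hAB : (A - B).PosSemidef) : B.rank ≤ A.rank :=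
  rank_le_rank_of_ker_le (ker_mulVecLin_le_of_posSemidef_sub hB hAB)

namespace PosSemidef

variable [DecidableEq n] {A : Matrix n n ℝ} (hA : A.PosSemidef)
include hA

theorem posSemidef_sqrt : hA.sqrt.PosSemidef := by
  unfold Matrix.PosSemidef.sqrt
  have hD : (diagonal ((↑) ∘ (hA.1.eigenvalues · |>.sqrt)) : Matrix n n ℝ).PosSemidef :=
    posSemidef_diagonal_iff.mpr fun i => by simp [Real.sqrt_nonneg]
  simpa [star_eq_conjTranspose] using
    hD.mul_mul_conjTranspose_same (hA.1.eigenvectorUnitary : Matrix n n ℝ)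

theorem transpose_sqrt : hA.sqrtᵀ = hA.sqrt :=
  (isHermitian_iff_isSymm.mp hA.posSemidef_sqrt.1).eq

theorem sqrt_mul_self : hA.sqrt * hA.sqrt = A := by
  unfold Matrix.PosSemidef.sqrt
  set U : Matrix n n ℝ := (hA.1.eigenvectorUnitary : Matrix n n ℝ)
  set D : Matrix n n ℝ := diagonal ((↑) ∘ (hA.1.eigenvalues · |>.sqrt))
  have hU : star U * U = 1 := Matrix.UnitaryGroup.star_mul_self _
  have hDD : D * D = diagonal (RCLike.ofReal ∘ hA.1.eigenvalues) := by
    simp only [D, diagonal_mul_diagonal]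
    congr 1
    funext i
    simp [Real.mul_self_sqrt (hA.eigenvalues_nonneg i)]
  calc U * D * star U * (U * D * star U) = U * D * (star U * U) * D * star U := by
        simp only [mul_assoc]
    _ = U * (D * D) * star U := by rw [hU]; simp only [mul_one, mul_assoc]
    _ = A := by
      rw [hDD]
      conv_rhs => rw [hA.1.spectral_theorem, Unitary.conjStarAlgAut_apply]

theorem rank_sqrt : hA.sqrt.rank = A.rank := by
  calc hA.sqrt.rank = (hA.sqrtᵀ * hA.sqrt).rank := (rank_transpose_mul_self _).symm
    _ = A.rank := by rw [hA.transpose_sqrt, hA.sqrt_mul_self]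

end PosSemidef

end Matrix

namespace IsMoorePenroseInv

variable {n : ℕ} {A B C : Matrix (Fin n) (Fin n) ℝ}

theorem unique (hB : IsMoorePenroseInv A B) (hC : IsMoorePenroseInv A C) : B = C := by
  obtain ⟨b1, b2, b3, b4⟩ := hB
  obtain ⟨c1, c2, c3, c4⟩ := hC
  have hAB : A * B = A * C := by
    calc A * B = (A * C) * (A * B) := by rw [← mul_assoc, c1]
    _ = (A * C)ᵀ * (A * B)ᵀ := by rw [c3, b3]
    _ = Cᵀ * (A * B * A)ᵀ := by simp only [transpose_mul, mul_assoc]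
    _ = A * C := by rw [b1, ← transpose_mul, c3]
  have hBA : B * A = C * A := by
    calc B * A = (B * A) * (C * A) := by rw [mul_assoc, ← mul_assoc A, c1]
    _ = (B * A)ᵀ * (C * A)ᵀ := by rw [b4, c4]
    _ = (A * B * A)ᵀ * Cᵀ := by simp only [transpose_mul, mul_assoc]
    _ = C * A := by rw [b1, ← transpose_mul, c4]
  calc B = B * (A * B) := by rw [← mul_assoc, b2]
  _ = (C * A) * C := by rw [hAB, ← mul_assoc, hBA]
  _ = C := c2

theorem transpose_eq (hB : IsMoorePenroseInv A B) (hA : Aᵀ = A) : Bᵀ = B := by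
  obtain ⟨b1, b2, b3, b4⟩ := hB
  refine unique ⟨?_, ?_, ?_, ?_⟩ ⟨b1, b2, b3, b4⟩
  · rw [← hA, ← transpose_mul, ← transpose_mul, ← mul_assoc, b1]
  · rw [← hA, ← transpose_mul, ← transpose_mul, ← mul_assoc, b2]
  · rw [transpose_mul, transpose_transpose, hA, ← b4, transpose_mul, hA]
  · rw [transpose_mul, transpose_transpose, hA, ← b3, transpose_mul, hA]

theorem posSemidef (hB : IsMoorePenroseInv A B) (hA : A.PosSemidef) : B.PosSemidef := by
  have hBt : Bᴴ = B := (conjTranspose_eq_transpose_of_trivial B).trans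
    (hB.transpose_eq (isHermitian_iff_isSymm.mp hA.1).eq)
  simpa only [hBt, hB.2.1] using hA.conjTranspose_mul_mul_same B

theorem rank_le_rank_sqrt_mul_mul_sqrt (hB : IsMoorePenroseInv A B) (hA : A.PosSemidef) :
    A.rank ≤ (hA.sqrt * B * hA.sqrt).rank := by
  set S := hA.sqrt
  have hSS : S * S = A := hA.sqrt_mul_self
  have hA_eq : S * (S * B * S) * S = A := by
    calc S * (S * B * S) * S = (S * S) * B * (S * S) := by simp only [mul_assoc]
      _ = A := by rw [hSS, hB.1]
  calc A.rank = (S * (S * B * S) * S).rank := by rw [hA_eq]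
  _ ≤ (S * (S * B * S)).rank := rank_mul_le_left _ _
  _ ≤ (S * B * S).rank := rank_mul_le_right _ _

end IsMoorePenroseInv

theorem stmt_2_general {n : ℕ} (Sig Sigp Psip : Matrix (Fin n) (Fin n) ℝ)
    (hSig : Sig.PosSemidef)
    (hSigp : IsMoorePenroseInv Sig Sigp)
    (hgep : (Psip - Sigp).PosSemidef) :
    ((hSig.sqrt)ᵀ * Psip * hSig.sqrt).rank = Sig.rank := by
  rw [hSig.transpose_sqrt]
  set S := hSig.sqrt
  have hS : Sᴴ = S := hSig.posSemidef_sqrt.1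
  have hP : (S * Sigp * S).PosSemidef := by
    simpa only [hS] using (hSigp.posSemidef hSig).conjTranspose_mul_mul_same S
  have hΦ_sub_P : (S * Psip * S - S * Sigp * S).PosSemidef := by
    simpa only [hS, mul_sub, sub_mul] using hgep.conjTranspose_mul_mul_same S
  refine le_antisymm ?_ ?_
  · calc (S * Psip * S).rank ≤ S.rank := rank_mul_le_right _ _
    _ = Sig.rank := hSig.rank_sqrt
  · exact (hSigp.rank_le_rank_sqrt_mul_mul_sqrt hSig).trans
      (rank_le_rank_of_posSemidef_sub hP hΦ_sub_P)

/-- If `Σ ⪰ Ψ ⪰ 0`, `Ψ⁺ ⪰ Σ⁺` and `Φ = (Σ^{1/2})ᵀ Ψ⁺ Σ^{1/2}`, then `rank Φ = rank Σ`. -/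
theorem stmt_2 {n : ℕ} (Sig Psi Sigp Psip : Matrix (Fin n) (Fin n) ℝ)
    (hSig : Sig.PosSemidef) (hPsi : Psi.PosSemidef)
    (hSigp : IsMoorePenroseInv Sig Sigp) (hPsip : IsMoorePenroseInv Psi Psip)
    (hge : (Sig - Psi).PosSemidef) (hgep : (Psip - Sigp).PosSemidef) :
    ((hSig.sqrt)ᵀ * Psip * hSig.sqrt).rank = Sig.rank :=
  stmt_2_general Sig Sigp Psip hSig hSigp hgep
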